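/- arXiv:1510.04356 — 3 statements merged into one kernel-verified Lean document; each statement's English description precedes it below -/
import Mathlib

section
/- Let n, N, N_G be positive integers, let M be a real n × (N·N_G) matrix whose columns are indexed by pairs (i,g) ∈ {1,…,N}×{1,…,N_G}, let y ∈ ℝⁿ, and let T ⊆ {1,…,N}. Suppose there exists c ∈ ℝ^{N·N_G} with M c = y whose row-support S = { i : the i-th row of reshape(c) is nonzero } satisfies S ⊆ T, and there exists a dual certificate λ ∈ ℝⁿ such that: (i) for every i ∈ S, the i-th row of reshape(Mᵀλ) equals C_{i}/‖C_{i}‖₂, where C = reshape(c) and C_{i} is its i-th row; (ii) for every i ∈ T \ S, the ℓ₂ norm of the i-th row of reshape(Mᵀλ) is at most 1; and (iii) for every i ∉ T, the ℓ₂ norm of the i-th row of reshape(Mᵀλ) is strictly less than 1. Then every z ∈ ℝ^{N·N_G} that minimizes ‖reshape(z)‖_{1,2} subject to M z = y satisfies: the i-th row of reshape(z) is zero for every i ∉ T. -/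
/-!
Since `Mᵀλ` has rows of norm at most `1`, row-wise Cauchy–Schwarz gives
`⟨Mᵀλ, z⟩ ≤ ∑ᵢ ‖(Mᵀλ)ᵢ‖ ‖zᵢ‖ ≤ ‖z‖_{1,2}`, while condition (i) gives `⟨Mᵀλ, c⟩ = ‖c‖_{1,2}`.
As `⟨Mᵀλ, z⟩ = ⟨λ, y⟩ = ⟨Mᵀλ, c⟩` and `z` is a minimizer, all these inequalities are
equalities, so `∑ᵢ (1 - ‖(Mᵀλ)ᵢ‖) ‖zᵢ‖ = 0`; every row with `‖(Mᵀλ)ᵢ‖ < 1` must vanish.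
-/

open Matrix

/-- The ℓ₂ norm of the `i`-th row of `reshape c`, where `c : ℝ^{N·N_G}` is indexed by
pairs `(i, g)` and `reshape c` is the `N × N_G` matrix with `(i,g)` entry `c (i,g)`. -/
noncomputable def rowNorm2 {N NG : ℕ} (c : Fin N × Fin NG → ℝ) (i : Fin N) : ℝ :=
  Real.sqrt (∑ g, (c (i, g)) ^ 2)

/-- The group-sparse norm `‖reshape c‖_{1,2}`: the sum of the ℓ₂ norms of the rows. -/
noncomputable def norm12 {N NG : ℕ} (c : Fin N × Fin NG → ℝ) : ℝ :=
  ∑ i, rowNorm2 c i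

section RowNorm

variable {N NG : ℕ}

lemma rowNorm2_nonneg (c : Fin N × Fin NG → ℝ) (i : Fin N) : 0 ≤ rowNorm2 c i :=
  Real.sqrt_nonneg _

lemma rowNorm2_sq (c : Fin N × Fin NG → ℝ) (i : Fin N) :
    rowNorm2 c i ^ 2 = ∑ g, c (i, g) ^ 2 :=
  Real.sq_sqrt (Finset.sum_nonneg fun _ _ => sq_nonneg _)

lemma rowNorm2_eq_zero_iff {c : Fin N × Fin NG → ℝ} {i : Fin N} :
    rowNorm2 c i = 0 ↔ ∀ g, c (i, g) = 0 := by
  rw [rowNorm2, Real.sqrt_eq_zero (Finset.sum_nonneg fun _ _ => sq_nonneg _),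
    Finset.sum_eq_zero_iff_of_nonneg fun _ _ => sq_nonneg _]
  simp

lemma sum_mul_le_rowNorm2_mul (d c : Fin N × Fin NG → ℝ) (i : Fin N) :
    ∑ g, d (i, g) * c (i, g) ≤ rowNorm2 d i * rowNorm2 c i :=
  Real.sum_mul_le_sqrt_mul_sqrt _ _ _

lemma dotProduct_le_sum_rowNorm2_mul (d c : Fin N × Fin NG → ℝ) :
    d ⬝ᵥ c ≤ ∑ i, rowNorm2 d i * rowNorm2 c i := by
  rw [dotProduct, Fintype.sum_prod_type]
  exact Finset.sum_le_sum fun i _ => sum_mul_le_rowNorm2_mul d c i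

lemma sum_mul_eq_rowNorm2_of_normalized {d c : Fin N × Fin NG → ℝ} {i : Fin N}
    (h : (∃ g, c (i, g) ≠ 0) → ∀ g, d (i, g) = c (i, g) / rowNorm2 c i) :
    ∑ g, d (i, g) * c (i, g) = rowNorm2 c i := by
  by_cases hS : ∃ g, c (i, g) ≠ 0
  · calc ∑ g, d (i, g) * c (i, g) = (∑ g, c (i, g) ^ 2) / rowNorm2 c i := by
          rw [Finset.sum_div]
          exact Finset.sum_congr rfl fun g _ => by rw [h hS g]; ring
      _ = rowNorm2 c i := by rw [← rowNorm2_sq, sq, mul_self_div_self]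
  · simp only [not_exists, not_not] at hS
    simp [hS, rowNorm2_eq_zero_iff.2 hS]

lemma dotProduct_eq_norm12_of_normalized {d c : Fin N × Fin NG → ℝ}
    (h : ∀ i, (∃ g, c (i, g) ≠ 0) → ∀ g, d (i, g) = c (i, g) / rowNorm2 c i) :
    d ⬝ᵥ c = norm12 c := by
  rw [dotProduct, Fintype.sum_prod_type, norm12]
  exact Finset.sum_congr rfl fun i _ => sum_mul_eq_rowNorm2_of_normalized (h i)

lemma rowNorm2_le_one_of_normalized {d c : Fin N × Fin NG → ℝ} {i : Fin N}
    (h : ∀ g, d (i, g) = c (i, g) / rowNorm2 c i) : rowNorm2 d i ≤ 1 := by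
  have hsq : rowNorm2 d i ^ 2 = rowNorm2 c i ^ 2 / rowNorm2 c i ^ 2 := by
    simp only [rowNorm2_sq, h, div_pow, Finset.sum_div]
  rw [← abs_of_nonneg (rowNorm2_nonneg d i), ← sq_le_one_iff_abs_le_one, hsq]
  exact div_self_le_one _

lemma rowNorm2_eq_zero_of_norm12_le_dotProduct {d z : Fin N × Fin NG → ℝ}
    (hd : ∀ i, rowNorm2 d i ≤ 1) (hz : norm12 z ≤ d ⬝ᵥ z) {i : Fin N}
    (hi : rowNorm2 d i < 1) : rowNorm2 z i = 0 := by
  have hterm_nonneg : ∀ j, 0 ≤ (1 - rowNorm2 d j) * rowNorm2 z j := fun j =>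
    mul_nonneg (sub_nonneg.2 (hd j)) (rowNorm2_nonneg z j)
  have hsum : ∑ j, (1 - rowNorm2 d j) * rowNorm2 z j = 0 := by
    refine le_antisymm ?_ (Finset.sum_nonneg fun j _ => hterm_nonneg j)
    have := hz.trans (dotProduct_le_sum_rowNorm2_mul d z)
    simp only [sub_mul, one_mul, Finset.sum_sub_distrib]
    rw [norm12] at this
    linarith
  have hterm := (Finset.sum_eq_zero_iff_of_nonneg fun j _ => hterm_nonneg j).1 hsum i
    (Finset.mem_univ i)
  exact (mul_eq_zero.1 hterm).resolve_left (sub_pos.2 hi).ne'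

end RowNorm

lemma transpose_mulVec_dotProduct {m n R : Type*} [Fintype m] [Fintype n] [CommSemiring R]
    (M : Matrix m n R) (v : m → R) (w : n → R) : (Mᵀ *ᵥ v) ⬝ᵥ w = v ⬝ᵥ (M *ᵥ w) := by
  rw [mulVec_transpose, dotProduct_mulVec]

theorem stmt0_general {n N NG : ℕ}
    (M : Matrix (Fin n) (Fin N × Fin NG) ℝ) (y : Fin n → ℝ) (T : Set (Fin N))
    -- a feasible `c` whose row-support `S = {i | row i of reshape c ≠ 0}` is contained in `T`
    (c : Fin N × Fin NG → ℝ) (hc : M *ᵥ c = y)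
    -- a dual certificate `λ`
    (lam : Fin n → ℝ)
    -- (i) on the row-support `S`, the rows of `reshape (Mᵀ λ)` equal the normalized rows of `reshape c`
    (h1 : ∀ i : Fin N, (∃ g, c (i, g) ≠ 0) →
      ∀ g, (Mᵀ *ᵥ lam) (i, g) = c (i, g) / rowNorm2 c i)
    -- (ii) on `T \ S`, the rows of `reshape (Mᵀ λ)` have ℓ₂ norm at most 1
    (h2 : ∀ i ∈ T, (∀ g, c (i, g) = 0) → rowNorm2 (Mᵀ *ᵥ lam) i ≤ 1)
    -- (iii) outside `T`, the rows of `reshape (Mᵀ λ)` have ℓ₂ norm strictly less than 1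
    (h3 : ∀ i ∉ T, rowNorm2 (Mᵀ *ᵥ lam) i < 1)
    -- `z` is any minimizer of `‖reshape ·‖_{1,2}` subject to `M z = y`
    (z : Fin N × Fin NG → ℝ) (hz : M *ᵥ z = y)
    (hopt : ∀ w : Fin N × Fin NG → ℝ, M *ᵥ w = y → norm12 z ≤ norm12 w) :
    ∀ i ∉ T, ∀ g, z (i, g) = 0 := by
  have hdual_le_one : ∀ i, rowNorm2 (Mᵀ *ᵥ lam) i ≤ 1 := by
    intro i
    by_cases hS : ∃ g, c (i, g) ≠ 0
    · exact rowNorm2_le_one_of_normalized (h1 i hS)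
    by_cases hT : i ∈ T
    · exact h2 i hT (by simpa using hS)
    · exact (h3 i hT).le
  have hz_le : norm12 z ≤ (Mᵀ *ᵥ lam) ⬝ᵥ z :=
    calc norm12 z ≤ norm12 c := hopt c hc
      _ = (Mᵀ *ᵥ lam) ⬝ᵥ c := (dotProduct_eq_norm12_of_normalized h1).symm
      _ = (Mᵀ *ᵥ lam) ⬝ᵥ z := by
        rw [transpose_mulVec_dotProduct, transpose_mulVec_dotProduct, hc, hz]
  intro i hi
  exact rowNorm2_eq_zero_iff.1
    (rowNorm2_eq_zero_of_norm12_le_dotProduct hdual_le_one hz_le (h3 i hi))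

theorem stmt0 {n N NG : ℕ} (hn : 0 < n) (hN : 0 < N) (hNG : 0 < NG)
    (M : Matrix (Fin n) (Fin N × Fin NG) ℝ) (y : Fin n → ℝ) (T : Set (Fin N))
    -- a feasible `c` whose row-support `S = {i | row i of reshape c ≠ 0}` is contained in `T`
    (c : Fin N × Fin NG → ℝ) (hc : M *ᵥ c = y)
    (hST : ∀ i : Fin N, (∃ g, c (i, g) ≠ 0) → i ∈ T)
    -- a dual certificate `λ`
    (lam : Fin n → ℝ)
    -- (i) on the row-support `S`, the rows of `reshape (Mᵀ λ)` equal the normalized rows of `reshape c`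
    (h1 : ∀ i : Fin N, (∃ g, c (i, g) ≠ 0) →
      ∀ g, (Mᵀ *ᵥ lam) (i, g) = c (i, g) / rowNorm2 c i)
    -- (ii) on `T \ S`, the rows of `reshape (Mᵀ λ)` have ℓ₂ norm at most 1
    (h2 : ∀ i ∈ T, (∀ g, c (i, g) = 0) → rowNorm2 (Mᵀ *ᵥ lam) i ≤ 1)
    -- (iii) outside `T`, the rows of `reshape (Mᵀ λ)` have ℓ₂ norm strictly less than 1
    (h3 : ∀ i ∉ T, rowNorm2 (Mᵀ *ᵥ lam) i < 1)
    -- `z` is any minimizer of `‖reshape ·‖_{1,2}` subject to `M z = y`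
    (z : Fin N × Fin NG → ℝ) (hz : M *ᵥ z = y)
    (hopt : ∀ w : Fin N × Fin NG → ℝ, M *ᵥ w = y → norm12 z ≤ norm12 w) :
    ∀ i ∉ T, ∀ g, z (i, g) = 0 :=
  stmt0_general M y T c hc lam h1 h2 h3 z hz hopt
end

section
/- Let n, N_G be positive integers and L_1, …, L_{N_G} ∈ ℝ^{n×n} be fixed matrices. Suppose the data matrix X ∈ ℝ^{n×N} has columns partitioned into L groups, where every column X_j in group m satisfies X_j = Q_m a_j for a matrix Q_m ∈ ℝ^{n×d_m} with orthonormal columns whose column span is invariant under each L_g (i.e., L_g Q_m u lies in the column span of Q_m for all u and g). Fix a column index i belonging to group ℓ, and let T ⊆ {1,…,N}\{i} be the indices of the other columns in group ℓ. Let A^ℓ_{−i,G} = Q_ℓᵀ [L_1 X^ℓ_{−i}, …, L_{N_G} X^ℓ_{−i}], where X^ℓ_{−i} collects the columns indexed by T. Suppose there exist c̄ indexed by T×{1,…,N_G} with A^ℓ_{−i,G} c̄ = a_i, and λ ∈ ℝ^{d_ℓ} such that: (i) for every j ∈ T with nonzero j-th row of reshape(c̄), the j-th row of reshape((A^ℓ_{−i,G})ᵀ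 λ) equals c̄_{j}/‖c̄_{j}‖₂; (ii) for the remaining j ∈ T, the ℓ₂ norm of the j-th row of reshape((A^ℓ_{−i,G})ᵀ λ) is at most 1; and (iii) for every column X_j of every group k ≠ ℓ, ‖X_{j,G}ᵀ (Q_ℓ λ)‖₂ < 1, where X_{j,G} = [L_1 X_j, …, L_{N_G} X_j] ∈ ℝ^{n×N_G}. Then every optimal solution z of: minimize ‖reshape(z)‖_{1,2} subject to X_{−i,G} z = X_i, where X_{−i,G} = [L_1 X_{−i}, …, L_{N_G} X_{−i}], has the property that every row of reshape(z) indexed by a column outside group ℓ is zero. -/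
/-!
The feasible point `c̄` of the reduced problem lifts, by zero rows outside group `ℓ`, to a
feasible point of the full problem: the columns `L_g X_j` of group `ℓ` stay in the span of
`Q_ℓ`, where `Q_ℓ Q_ℓᵀ` is the identity. Conditions (i) and (ii) make `y = Q_ℓ λ` a dual
certificate for the group-sparse norm: every row of `reshape (X_{-i,G}ᵀ y)` has norm at most
`1`, and `⟨X_i, y⟩ = ‖reshape c̄‖_{1,2}`. For an optimal `z` this gives
`‖reshape z‖_{1,2} ≤ ⟨X_i, y⟩ = ∑_j ⟨(X_{-i,G}ᵀ y)_j, z_j⟩ ≤ ∑_j ‖(X_{-i,G}ᵀ y)_j‖ ‖z_j‖`,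
so every row `z_j` with `‖(X_{-i,G}ᵀ y)_j‖ < 1`, in particular every row outside group `ℓ`
by (iii), vanishes.
-/

open Matrix

theorem fun_sum_mul_eq_sum_smul {ι m R : Type*} [Fintype ι] [CommSemiring R]
    (x : ι → m → R) (c : ι → R) : (fun r => ∑ p, x p r * c p) = ∑ p, c p • x p := by
  ext r
  simp [Finset.sum_apply, mul_comm]

section NormalizedRow

variable {κ : Type*} [Fintype κ] {c v : κ → ℝ}

theorem sum_mul_eq_sqrt_sum_sq_of_eq_div
    (hv : (∃ g, c g ≠ 0) → ∀ g, v g = c g / √(∑ g', c g' ^ 2)) :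
    ∑ g, c g * v g = √(∑ g, c g ^ 2) := by
  by_cases hc : ∃ g, c g ≠ 0
  · simp_rw [hv hc, mul_div_assoc', ← sq, ← Finset.sum_div, Real.div_sqrt]
  · simp [not_exists_not.1 hc]

theorem sqrt_sum_sq_le_one_of_eq_div
    (hv : (∃ g, c g ≠ 0) → ∀ g, v g = c g / √(∑ g', c g' ^ 2))
    (hv0 : (∀ g, c g = 0) → √(∑ g, v g ^ 2) ≤ 1) : √(∑ g, v g ^ 2) ≤ 1 := by
  by_cases hc : ∃ g, c g ≠ 0
  · obtain ⟨g, hg⟩ := hc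
    have hpos : 0 < ∑ g', c g' ^ 2 :=
      Finset.sum_pos' (fun _ _ => sq_nonneg _) ⟨g, Finset.mem_univ g, by positivity⟩
    simp_rw [hv ⟨g, hg⟩, div_pow, Real.sq_sqrt hpos.le, ← Finset.sum_div, div_self hpos.ne',
      Real.sqrt_one, le_refl]
  · exact hv0 (not_exists_not.1 hc)

end NormalizedRow

theorem row_eq_zero_of_sum_sqrt_le_sum_mul {ι κ : Type*} [Fintype ι] [Fintype κ]
    (v z : ι × κ → ℝ) (h : ∑ j, √(∑ g, z (j, g) ^ 2) ≤ ∑ p, v p * z p)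
    (hv : ∀ j, √(∑ g, v (j, g) ^ 2) ≤ 1) {j : ι} (hj : √(∑ g, v (j, g) ^ 2) < 1) (g : κ) :
    z (j, g) = 0 := by
  set zn : ι → ℝ := fun j => √(∑ g, z (j, g) ^ 2)
  set vn : ι → ℝ := fun j => √(∑ g, v (j, g) ^ 2)
  have hslack : ∀ j, 0 ≤ (1 - vn j) * zn j := fun j =>
    mul_nonneg (sub_nonneg.2 (hv j)) (Real.sqrt_nonneg _)
  have hsum : ∑ j, (1 - vn j) * zn j ≤ 0 :=
    calc ∑ j, (1 - vn j) * zn j = ∑ j, zn j - ∑ j, vn j * zn j := by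
          simp only [sub_mul, one_mul, Finset.sum_sub_distrib]
      _ ≤ ∑ p, v p * z p - ∑ j, ∑ g, v (j, g) * z (j, g) :=
          sub_le_sub h (Finset.sum_le_sum fun j _ => Real.sum_mul_le_sqrt_mul_sqrt _ _ _)
      _ = 0 := by rw [Fintype.sum_prod_type, sub_self]
  have hj0 : (1 - vn j) * zn j = 0 :=
    (Finset.sum_eq_zero_iff_of_nonneg fun j _ => hslack j).1
      (le_antisymm hsum (Finset.sum_nonneg fun j _ => hslack j)) j (Finset.mem_univ j)
  have hzn : zn j = 0 := (mul_eq_zero.1 hj0).resolve_left (sub_ne_zero.2 hj.ne')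
  rw [Real.sqrt_eq_zero (Finset.sum_nonneg fun _ _ => sq_nonneg _),
    Finset.sum_eq_zero_iff_of_nonneg fun _ _ => sq_nonneg _] at hzn
  exact pow_eq_zero_iff two_ne_zero |>.1 (hzn g (Finset.mem_univ g))

theorem row_eq_zero_of_dual_certificate {ι κ m : Type*} [Fintype ι] [Fintype κ] [Fintype m]
    (col : ι × κ → m → ℝ) (b y : m → ℝ) (z : ι × κ → ℝ) (hz : ∑ p, z p • col p = b)
    (hbound : ∑ j, √(∑ g, z (j, g) ^ 2) ≤ b ⬝ᵥ y)
    (hdual : ∀ j, √(∑ g, (col (j, g) ⬝ᵥ y) ^ 2) ≤ 1) {j : ι}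
    (hj : √(∑ g, (col (j, g) ⬝ᵥ y) ^ 2) < 1) (g : κ) : z (j, g) = 0 := by
  refine row_eq_zero_of_sum_sqrt_le_sum_mul (fun p => col p ⬝ᵥ y) z ?_ hdual hj g
  simpa only [← hz, sum_dotProduct, smul_dotProduct, smul_eq_mul, mul_comm] using hbound

section ExtendRows

variable {α κ : Type*} [Fintype κ] {q p : α → Prop} [DecidablePred p]
  [Fintype {x // q x}] [Fintype {x // q x ∧ p x}]

theorem sum_subtype_eq_sum_subtype_and {M : Type*} [AddCommMonoid M] (F : {x // q x} → M)
    (hF : ∀ x, ¬ p x.1 → F x = 0) : ∑ x, F x = ∑ x : {x // q x ∧ p x}, F ⟨x.1, x.2.1⟩ := by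
  classical
  have hzero : ∑ x : {x : {x // q x} // ¬ p x.1}, F x = 0 :=
    Finset.sum_eq_zero fun x _ => hF x x.2
  rw [← Fintype.sum_subtype_add_sum_subtype (fun x : {x // q x} => p x.1) F, hzero, add_zero]
  exact Fintype.sum_equiv (Equiv.subtypeSubtypeEquivSubtypeInter q p) _ _ fun _ => rfl

def extendRows (c : {x // q x ∧ p x} × κ → ℝ) : {x // q x} × κ → ℝ :=
  fun jg => if h : p jg.1.1 then c (⟨jg.1.1, jg.1.2, h⟩, jg.2) else 0

theorem sum_extendRows_smul {E : Type*} [AddCommMonoid E] [Module ℝ E]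
    (c : {x // q x ∧ p x} × κ → ℝ) (u : {x // q x} × κ → E) :
    ∑ jg, extendRows c jg • u jg = ∑ jg, c jg • u (⟨jg.1.1, jg.1.2.1⟩, jg.2) := by
  rw [Fintype.sum_prod_type, Fintype.sum_prod_type,
    sum_subtype_eq_sum_subtype_and (p := p) _ fun x hx => by simp [extendRows, hx]]
  exact Finset.sum_congr rfl fun x _ => by simp [extendRows, x.2.2]

theorem sum_sqrt_extendRows (c : {x // q x ∧ p x} × κ → ℝ) :
    ∑ j, √(∑ g, extendRows c (j, g) ^ 2) = ∑ j, √(∑ g, c (j, g) ^ 2) := by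
  rw [sum_subtype_eq_sum_subtype_and (p := p) _ fun x hx => by simp [extendRows, hx]]
  exact Finset.sum_congr rfl fun x _ => by simp [extendRows, x.2.2]

end ExtendRows

theorem mulVec_transpose_mulVec_of_mem_range {m k : Type*} [Fintype m] [Fintype k]
    [DecidableEq k] {Q : Matrix m k ℝ} (hQ : Qᵀ * Q = 1) {x : m → ℝ} (hx : ∃ u, Q *ᵥ u = x) :
    Q *ᵥ (Qᵀ *ᵥ x) = x := by
  obtain ⟨u, rfl⟩ := hx
  rw [mulVec_mulVec u Qᵀ Q, hQ, one_mulVec]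

theorem sum_smul_eq_mulVec_of_reduced {ι m k : Type*} [Fintype ι] [Fintype m] [Fintype k]
    (Q : Matrix m k ℝ) (x : ι → m → ℝ) (c : ι → ℝ) {a : k → ℝ}
    (hx : ∀ p, Q *ᵥ (Qᵀ *ᵥ x p) = x p) (h : ∑ p, c p • (Qᵀ *ᵥ x p) = a) :
    ∑ p, c p • x p = Q *ᵥ a := by
  simp [← h, mulVec_sum, mulVec_smul, hx]

theorem stmt3_general {n NG N L : ℕ}
    (Lg : Fin NG → Matrix (Fin n) (Fin n) ℝ)
    (grp : Fin N → Fin L) (d : Fin L → ℕ)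
    (Q : (m : Fin L) → Matrix (Fin n) (Fin (d m)) ℝ)
    -- orthonormal columns
    (hQ : ∀ m, (Q m)ᵀ * Q m = 1)
    -- the column span of each `Q m` is invariant under each `Lg g`
    (hinv : ∀ (m : Fin L) (g : Fin NG) (u : Fin (d m) → ℝ),
      ∃ w : Fin (d m) → ℝ, Q m *ᵥ w = Lg g *ᵥ (Q m *ᵥ u))
    (X : Matrix (Fin n) (Fin N) ℝ)
    (a : (j : Fin N) → Fin (d (grp j)) → ℝ)
    (hX : ∀ j, (fun r => X r j) = Q (grp j) *ᵥ a j)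
    (i : Fin N)
    -- `c̄`, indexed by `T × {1,…,N_G}` with `T` the other columns of group `grp i`,
    -- solves the reduced system `A^ℓ_{-i,G} c̄ = a_i`,
    -- where the `(j,g)` column of `A^ℓ_{-i,G}` is `(Q ℓ)ᵀ (Lg g) X_j`
    (cbar : {j : Fin N // j ≠ i ∧ grp j = grp i} × Fin NG → ℝ)
    (hcbar : (fun r => ∑ jg : {j : Fin N // j ≠ i ∧ grp j = grp i} × Fin NG,
        ((Q (grp i))ᵀ *ᵥ (Lg jg.2 *ᵥ fun s => X s jg.1.1)) r * cbar jg) = a i)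
    (lam : Fin (d (grp i)) → ℝ)
    -- (i) on the row-support of `c̄`, the rows of `reshape ((A^ℓ_{-i,G})ᵀ λ)` are the
    -- normalized rows of `reshape c̄`
    (h1 : ∀ j : {j : Fin N // j ≠ i ∧ grp j = grp i}, (∃ g, cbar (j, g) ≠ 0) →
      ∀ g, ((Q (grp i))ᵀ *ᵥ (Lg g *ᵥ fun s => X s j.1)) ⬝ᵥ lam =
        cbar (j, g) / Real.sqrt (∑ g', (cbar (j, g')) ^ 2))
    -- (ii) on the remaining rows of `T`, the rows of `reshape ((A^ℓ_{-i,G})ᵀ λ)` have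
    -- ℓ₂ norm at most 1
    (h2 : ∀ j : {j : Fin N // j ≠ i ∧ grp j = grp i}, (∀ g, cbar (j, g) = 0) →
      Real.sqrt (∑ g, (((Q (grp i))ᵀ *ᵥ (Lg g *ᵥ fun s => X s j.1)) ⬝ᵥ lam) ^ 2) ≤ 1)
    -- (iii) for every column of every other group, `‖X_{j,G}ᵀ (Q ℓ λ)‖₂ < 1`
    (h3 : ∀ j : Fin N, grp j ≠ grp i →
      Real.sqrt (∑ g, ((Lg g *ᵥ fun s => X s j) ⬝ᵥ (Q (grp i) *ᵥ lam)) ^ 2) < 1)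
    -- `z` is an optimal solution of `min ‖reshape ·‖_{1,2}` s.t. `X_{-i,G} z = X_i`
    (z : {j : Fin N // j ≠ i} × Fin NG → ℝ)
    (hz : (fun r => ∑ jg : {j : Fin N // j ≠ i} × Fin NG,
        (Lg jg.2 *ᵥ fun s => X s jg.1.1) r * z jg) = fun r => X r i)
    (hopt : ∀ w : {j : Fin N // j ≠ i} × Fin NG → ℝ,
      (fun r => ∑ jg : {j : Fin N // j ≠ i} × Fin NG,
        (Lg jg.2 *ᵥ fun s => X s jg.1.1) r * w jg) = (fun r => X r i) →
      ∑ j : {j : Fin N // j ≠ i}, Real.sqrt (∑ g, (z (j, g)) ^ 2) ≤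
        ∑ j : {j : Fin N // j ≠ i}, Real.sqrt (∑ g, (w (j, g)) ^ 2)) :
    ∀ j : {j : Fin N // j ≠ i}, grp j.1 ≠ grp i → ∀ g, z (j, g) = 0 := by
  classical
  have hrange : ∀ j : Fin N, grp j = grp i → ∀ g : Fin NG,
      Q (grp i) *ᵥ ((Q (grp i))ᵀ *ᵥ (Lg g *ᵥ fun s => X s j)) = Lg g *ᵥ fun s => X s j := by
    intro j hj g
    obtain ⟨u, hu⟩ : ∃ u, Q (grp i) *ᵥ u = fun s => X s j := by
      rw [hX, ← hj]
      exact ⟨a j, rfl⟩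
    obtain ⟨w, hw⟩ := hinv (grp i) g u
    exact mulVec_transpose_mulVec_of_mem_range (hQ _) ⟨w, by rw [hw, hu]⟩
  have hfeas : (fun r => ∑ jg : {j : Fin N // j ≠ i} × Fin NG,
      (Lg jg.2 *ᵥ fun s => X s jg.1.1) r * extendRows cbar jg) = fun r => X r i := by
    rw [fun_sum_mul_eq_sum_smul, sum_extendRows_smul, hX i]
    refine sum_smul_eq_mulVec_of_reduced _ _ _ (fun jg => hrange jg.1.1 jg.1.2.2 jg.2) ?_
    rw [← hcbar, fun_sum_mul_eq_sum_smul]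
  have hdot_transpose : ∀ (j : Fin N) (g : Fin NG), (Lg g *ᵥ fun s => X s j) ⬝ᵥ (Q (grp i) *ᵥ lam) =
      ((Q (grp i))ᵀ *ᵥ (Lg g *ᵥ fun s => X s j)) ⬝ᵥ lam := fun j g => by
    rw [dotProduct_mulVec, mulVec_transpose]
  have hval : (fun r => X r i) ⬝ᵥ (Q (grp i) *ᵥ lam) =
      ∑ j : {j : Fin N // j ≠ i ∧ grp j = grp i}, √(∑ g, cbar (j, g) ^ 2) := by
    rw [hX i, dotProduct_mulVec, ← mulVec_transpose, mulVec_mulVec, hQ, one_mulVec, ← hcbar,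
      fun_sum_mul_eq_sum_smul, sum_dotProduct, Fintype.sum_prod_type]
    simp only [smul_dotProduct, smul_eq_mul]
    exact Finset.sum_congr rfl fun j _ => sum_mul_eq_sqrt_sum_sq_of_eq_div (h1 j)
  have hdual : ∀ j : {j : Fin N // j ≠ i},
      √(∑ g, ((Lg g *ᵥ fun s => X s j.1) ⬝ᵥ (Q (grp i) *ᵥ lam)) ^ 2) ≤ 1 := by
    intro j
    by_cases hj : grp j.1 = grp i
    · simp_rw [hdot_transpose]
      exact sqrt_sum_sq_le_one_of_eq_div (h1 ⟨j.1, j.2, hj⟩) (h2 ⟨j.1, j.2, hj⟩)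
    · exact (h3 j.1 hj).le
  have hbound : ∑ j, √(∑ g, z (j, g) ^ 2) ≤ (fun r => X r i) ⬝ᵥ (Q (grp i) *ᵥ lam) :=
    (hopt _ hfeas).trans ((sum_sqrt_extendRows cbar).trans hval.symm).le
  have hz_smul : ∑ p, z p • (fun jg : {j : Fin N // j ≠ i} × Fin NG =>
      Lg jg.2 *ᵥ fun s => X s jg.1.1) p = fun r => X r i := by
    rw [← hz, fun_sum_mul_eq_sum_smul]
  intro j hj g
  exact row_eq_zero_of_dual_certificate _ _ _ z hz_smul hbound hdual (h3 j.1 hj) g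

/-- Submodule identification for SSmC. The data columns of `X` are partitioned into `L` groups
(via `grp`); columns in group `m` lie in the span of `Q m`, whose columns are orthonormal and
whose span is invariant under each group action matrix `Lg g`. If for the column `i` (of group
`grp i`) there is a solution `c̄` of the reduced system over the set `T` of other columns of
group `grp i`, together with a dual certificate `λ` satisfying conditions (i)–(iii), then every
optimal solution `z` of `min ‖reshape z‖_{1,2} s.t. X_{-i,G} z = X_i` has zero rows at every
column belonging to a group other than `grp i`. -/
theorem stmt3 {n NG N L : ℕ} (hn : 0 < n) (hNG : 0 < NG) (hL : 0 < L)
    (Lg : Fin NG → Matrix (Fin n) (Fin n) ℝ)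
    (grp : Fin N → Fin L) (d : Fin L → ℕ)
    (Q : (m : Fin L) → Matrix (Fin n) (Fin (d m)) ℝ)
    -- orthonormal columns
    (hQ : ∀ m, (Q m)ᵀ * Q m = 1)
    -- the column span of each `Q m` is invariant under each `Lg g`
    (hinv : ∀ (m : Fin L) (g : Fin NG) (u : Fin (d m) → ℝ),
      ∃ w : Fin (d m) → ℝ, Q m *ᵥ w = Lg g *ᵥ (Q m *ᵥ u))
    (X : Matrix (Fin n) (Fin N) ℝ)
    (a : (j : Fin N) → Fin (d (grp j)) → ℝ)
    (hX : ∀ j, (fun r => X r j) = Q (grp j) *ᵥ a j)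
    (i : Fin N)
    -- `c̄`, indexed by `T × {1,…,N_G}` with `T` the other columns of group `grp i`,
    -- solves the reduced system `A^ℓ_{-i,G} c̄ = a_i`,
    -- where the `(j,g)` column of `A^ℓ_{-i,G}` is `(Q ℓ)ᵀ (Lg g) X_j`
    (cbar : {j : Fin N // j ≠ i ∧ grp j = grp i} × Fin NG → ℝ)
    (hcbar : (fun r => ∑ jg : {j : Fin N // j ≠ i ∧ grp j = grp i} × Fin NG,
        ((Q (grp i))ᵀ *ᵥ (Lg jg.2 *ᵥ fun s => X s jg.1.1)) r * cbar jg) = a i)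
    (lam : Fin (d (grp i)) → ℝ)
    -- (i) on the row-support of `c̄`, the rows of `reshape ((A^ℓ_{-i,G})ᵀ λ)` are the
    -- normalized rows of `reshape c̄`
    (h1 : ∀ j : {j : Fin N // j ≠ i ∧ grp j = grp i}, (∃ g, cbar (j, g) ≠ 0) →
      ∀ g, ((Q (grp i))ᵀ *ᵥ (Lg g *ᵥ fun s => X s j.1)) ⬝ᵥ lam =
        cbar (j, g) / Real.sqrt (∑ g', (cbar (j, g')) ^ 2))
    -- (ii) on the remaining rows of `T`, the rows of `reshape ((A^ℓ_{-i,G})ᵀ λ)` have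
    -- ℓ₂ norm at most 1
    (h2 : ∀ j : {j : Fin N // j ≠ i ∧ grp j = grp i}, (∀ g, cbar (j, g) = 0) →
      Real.sqrt (∑ g, (((Q (grp i))ᵀ *ᵥ (Lg g *ᵥ fun s => X s j.1)) ⬝ᵥ lam) ^ 2) ≤ 1)
    -- (iii) for every column of every other group, `‖X_{j,G}ᵀ (Q ℓ λ)‖₂ < 1`
    (h3 : ∀ j : Fin N, grp j ≠ grp i →
      Real.sqrt (∑ g, ((Lg g *ᵥ fun s => X s j) ⬝ᵥ (Q (grp i) *ᵥ lam)) ^ 2) < 1)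
    -- `z` is an optimal solution of `min ‖reshape ·‖_{1,2}` s.t. `X_{-i,G} z = X_i`
    (z : {j : Fin N // j ≠ i} × Fin NG → ℝ)
    (hz : (fun r => ∑ jg : {j : Fin N // j ≠ i} × Fin NG,
        (Lg jg.2 *ᵥ fun s => X s jg.1.1) r * z jg) = fun r => X r i)
    (hopt : ∀ w : {j : Fin N // j ≠ i} × Fin NG → ℝ,
      (fun r => ∑ jg : {j : Fin N // j ≠ i} × Fin NG,
        (Lg jg.2 *ᵥ fun s => X s jg.1.1) r * w jg) = (fun r => X r i) →
      ∑ j : {j : Fin N // j ≠ i}, Real.sqrt (∑ g, (z (j, g)) ^ 2) ≤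
        ∑ j : {j : Fin N // j ≠ i}, Real.sqrt (∑ g, (w (j, g)) ^ 2)) :
    ∀ j : {j : Fin N // j ≠ i}, grp j.1 ≠ grp i → ∀ g, z (j, g) = 0 :=
  stmt3_general Lg grp d Q hQ hinv X a hX i cbar hcbar lam h1 h2 h3 z hz hopt
end

section
/- Let Q ∈ ℝ^{n×d} have orthonormal columns whose column span is invariant under each of L_1, …, L_{N_G} ∈ ℝ^{n×n} (i.e., L_g Q u lies in the column span of Q for every u ∈ ℝ^d and every g). Let X_1, …, X_m ∈ ℝⁿ be columns lying in the column span of Q, with X_j = Q a_j, and let X_i = Q a_i also lie in this span. Set A_G = Qᵀ [L_1 X, …, L_{N_G} X] ∈ ℝ^{d × m·N_G} and X_G = [L_1 X, …, L_{N_G} X] ∈ ℝ^{n × m·N_G}, where X = [X_1, …, X_m]. Then for every c̄ ∈ ℝ^{m·N_G}, A_G c̄ = a_i implies X_G c̄ = X_i. Consequently, any solution of the reduced linear system in the coordinates of the submodule, when zero-padded over the remaining data points, is feasible for the full self-representation constraint with the same group-sparse norm ‖reshape(·)‖_{1,2}. -/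
open Matrix

/-! If `Qᵀ Q = 1`, then `Q Qᵀ` fixes the column span of `Q`. The invariance of that span under
every `L g` puts each column `L g X_j` of `X_G` inside it, so `X_G = Q Qᵀ X_G = Q A_G`, and then
`X_G c̄ = Q (A_G c̄) = Q aᵢ`. -/

namespace Matrix

variable {R n d ι : Type*} [CommSemiring R] [Fintype n] [Fintype d] [DecidableEq d]

theorem mulVec_transpose_mulVec_of_transpose_mul_self {Q : Matrix n d R} (hQ : Qᵀ * Q = 1)
    {v : n → R} (hv : ∃ w, Q *ᵥ w = v) : Q *ᵥ (Qᵀ *ᵥ v) = v := by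
  obtain ⟨w, rfl⟩ := hv
  rw [mulVec_mulVec w Qᵀ Q, hQ, one_mulVec]

theorem mul_transpose_mul_of_transpose_mul_self {Q : Matrix n d R} (hQ : Qᵀ * Q = 1)
    {X : Matrix n ι R} (hX : ∀ j, ∃ w, Q *ᵥ w = Xᵀ j) : Q * (Qᵀ * X) = X := by
  ext r j
  exact congrFun (mulVec_transpose_mulVec_of_transpose_mul_self hQ (hX j)) r

end Matrix

/-- If the column span of `Q` (orthonormal columns) is invariant under each `L g`, and all the
data points `X j = Q (a j)` as well as `X i = Q aᵢ` lie in this span, then any solution `c̄` of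
the reduced system `A_G c̄ = aᵢ` (in the coordinates of the submodule) solves the full
self-representation system `X_G c̄ = Xᵢ`. Here `A_G = Qᵀ [L₁ X, …, L_{N_G} X]` and
`X_G = [L₁ X, …, L_{N_G} X]`. -/
theorem stmt10 {n d m NG : ℕ}
    (Q : Matrix (Fin n) (Fin d) ℝ) (hQ : Qᵀ * Q = 1)
    (L : Fin NG → Matrix (Fin n) (Fin n) ℝ)
    (hinv : ∀ (g : Fin NG) (u : Fin d → ℝ), ∃ w : Fin d → ℝ, Q *ᵥ w = L g *ᵥ (Q *ᵥ u))
    (a : Fin m → Fin d → ℝ) (ai : Fin d → ℝ)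
    (AG : Matrix (Fin d) (Fin m × Fin NG) ℝ)
    (hAG : ∀ r jg, AG r jg = (Qᵀ *ᵥ (L jg.2 *ᵥ (Q *ᵥ a jg.1))) r)
    (XG : Matrix (Fin n) (Fin m × Fin NG) ℝ)
    (hXG : ∀ r jg, XG r jg = (L jg.2 *ᵥ (Q *ᵥ a jg.1)) r)
    (cbar : Fin m × Fin NG → ℝ) (hc : AG *ᵥ cbar = ai) :
    XG *ᵥ cbar = Q *ᵥ ai := by
  have hcol : ∀ jg, XGᵀ jg = L jg.2 *ᵥ (Q *ᵥ a jg.1) := fun jg => funext fun r => hXG r jg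
  have hAG_eq : AG = Qᵀ * XG := by
    ext r jg
    rw [hAG, ← hcol]
    rfl
  have hXG_eq : Q * AG = XG := by
    rw [hAG_eq]
    exact mul_transpose_mul_of_transpose_mul_self hQ fun jg => hcol jg ▸ hinv jg.2 (a jg.1)
  rw [← hXG_eq, ← mulVec_mulVec, hc]
end
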